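/- arXiv:1609.00955 — 6 statements merged into one kernel-verified Lean document; each statement's English description precedes it below -/
import Mathlib

section
/- Let M be a nonzero comultiplication R-module and N a submodule of M. Then N is a large (essential) submodule of M if and only if Soc(M) ⊆ N. -/
/-- `M` is a comultiplication `R`-module: every submodule is of the form `(0 :_M I)`. -/
def IsComultiplication (R M : Type*) [CommRing R] [AddCommGroup M] [Module R M] : Prop :=
  ∀ N : Submodule R M, ∃ I : Ideal R, ∀ m : M, m ∈ N ↔ ∀ r ∈ I, r • m = 0

/-- A submodule is large (essential) if it meets every nonzero submodule nontrivially. -/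
def IsLarge {R M : Type*} [CommRing R] [AddCommGroup M] [Module R M]
    (N : Submodule R M) : Prop :=
  ∀ L : Submodule R M, L ≠ ⊥ → N ⊓ L ≠ ⊥

/-!
Every nonzero submodule `L` of a comultiplication module contains a simple submodule: pick
`0 ≠ m ∈ L` and a maximal ideal `P ⊇ Ann(m)`. By Nakayama `m ∉ P • Rm`, and since
`P • Rm = (0 :_M Ann(P • Rm))`, some `r ∈ Ann(P • Rm)` has `r • m ≠ 0`. This element is
killed by `P`, so `R ∙ (r • m) ≅ R ⧸ P` is simple. Hence the submodule lattice is atomic,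
and in an atomic lattice an element meets every nonzero element iff it lies above every atom.
-/

theorem forall_not_disjoint_iff_sSup_atoms_le {α : Type*} [CompleteLattice α] [IsAtomic α]
    {a : α} : (∀ b, b ≠ ⊥ → ¬Disjoint a b) ↔ sSup {x : α | IsAtom x} ≤ a := by
  rw [sSup_le_iff]
  constructor
  · intro h x hx
    exact hx.not_disjoint_iff_le.mp fun hxa ↦ h x hx.ne_bot hxa.symm
  · intro h b hb hab
    obtain ⟨x, hx, hxb⟩ := (eq_bot_or_exists_atom_le b).resolve_left hb
    exact hx.ne_bot ((hab.mono_right hxb).eq_bot_of_ge (h x hx))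

section

variable {R M : Type*} [CommRing R] [AddCommGroup M] [Module R M]

theorem Submodule.notMem_smul_span_singleton_of_torsionOf_le {P : Ideal R} (hP : P ≠ ⊤)
    {m : M} (hm : Ideal.torsionOf R M m ≤ P) : m ∉ P • (R ∙ m) := by
  intro hmem
  obtain ⟨r, hrP, hrm⟩ := mem_smul_span_singleton.mp hmem
  have hr : 1 - r ∈ P :=
    hm <| (Ideal.mem_torsionOf_iff m _).mpr <| by rw [sub_smul, one_smul, hrm, sub_self]
  exact hP <| (Ideal.eq_top_iff_one P).mpr <| by simpa using P.add_mem hr hrP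

theorem Submodule.isAtom_span_singleton_of_isMaximal_le_torsionOf {P : Ideal R} (hP : P.IsMaximal)
    {s : M} (hs : s ≠ 0) (hPs : P ≤ Ideal.torsionOf R M s) : IsAtom (R ∙ s) := by
  have htors : Ideal.torsionOf R M s = P :=
    (hP.eq_of_le ((Ideal.torsionOf_eq_top_iff R s).not.mpr hs) hPs).symm
  rw [← isSimpleModule_iff_isAtom, isSimpleModule_iff_quot_maximal]
  exact ⟨_, htors ▸ hP, ⟨(Ideal.quotTorsionOfEquivSpanSingleton R M s).symm⟩⟩

theorem IsComultiplication.exists_mem_annihilator_smul_ne_zero (hc : IsComultiplication R M)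
    {K : Submodule R M} {m : M} (hm : m ∉ K) : ∃ r ∈ K.annihilator, r • m ≠ 0 := by
  obtain ⟨I, hI⟩ := hc K
  obtain ⟨r, hrI, hrm⟩ : ∃ r ∈ I, r • m ≠ 0 := by
    by_contra! h
    exact hm ((hI m).mpr h)
  exact ⟨r, Submodule.mem_annihilator.mpr fun n hn ↦ (hI n).mp hn r hrI, hrm⟩

theorem IsComultiplication.isAtomic (hc : IsComultiplication R M) :
    IsAtomic (Submodule R M) := by
  refine ⟨fun L ↦ or_iff_not_imp_left.mpr fun hL ↦ ?_⟩
  obtain ⟨m, hmL, hm⟩ := (Submodule.ne_bot_iff L).mp hL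
  obtain ⟨P, hP, hmP⟩ :=
    Ideal.exists_le_maximal _ ((Ideal.torsionOf_eq_top_iff R m).not.mpr hm)
  obtain ⟨r, hr, hrm⟩ := hc.exists_mem_annihilator_smul_ne_zero
    (Submodule.notMem_smul_span_singleton_of_torsionOf_le hP.ne_top hmP)
  have hPr : P ≤ Ideal.torsionOf R M (r • m) := fun p hp ↦ by
    rw [Ideal.mem_torsionOf_iff, smul_comm]
    exact Submodule.mem_annihilator.mp hr _
      (Submodule.smul_mem_smul hp (Submodule.mem_span_singleton_self m))
  exact ⟨_, Submodule.isAtom_span_singleton_of_isMaximal_le_torsionOf hP hrm hPr,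
    (Submodule.span_singleton_le_iff_mem _ L).mpr (L.smul_mem r hmL)⟩

end

theorem stmt1_general {R M : Type*} [CommRing R] [AddCommGroup M] [Module R M]
    (hc : IsComultiplication R M) (N : Submodule R M) :
    IsLarge N ↔ sSup {S : Submodule R M | IsAtom S} ≤ N := by
  have := hc.isAtomic
  simp only [IsLarge, ne_eq, ← disjoint_iff]
  exact forall_not_disjoint_iff_sSup_atoms_le

/-- In a nonzero comultiplication module, a submodule is large iff it contains the socle. -/
theorem stmt1 {R M : Type*} [CommRing R] [AddCommGroup M] [Module R M]
    [Nontrivial M] (hc : IsComultiplication R M) (N : Submodule R M) :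
    IsLarge N ↔ sSup {S : Submodule R M | IsAtom S} ≤ N :=
  stmt1_general hc N
end

section
/- A nonzero comultiplication R-module M is uniform if and only if M is cocyclic. -/
/-!
Uniformity leaves room for at most one atom, so once a simple submodule exists the socle is that
submodule, and it is large because it meets every nonzero submodule. A comultiplication module does
have a simple submodule: for `x ≠ 0` and a maximal ideal `P ⊇ ann(x)` we have `x ∉ P x`; writing
`P x = (0 :_M I)` yields `b ∈ I` with `b x ≠ 0` and `P (b x) = b (P x) = 0`, so `R b x ≅ R ⧸ P`.
Conversely, a simple large socle lies inside every nonzero submodule.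
-/

open Ideal Submodule

section Lattice

variable {α : Type*} [Lattice α] [OrderBot α]

lemma IsAtom.le_of_inf_ne_bot {a b : α} (ha : IsAtom a) (hab : a ⊓ b ≠ ⊥) : a ≤ b :=
  ha.not_disjoint_iff_le.mp (disjoint_iff.not.mpr hab)

lemma setOf_isAtom_eq_singleton {a : α} (ha : IsAtom a)
    (huniform : ∀ b c : α, b ≠ ⊥ → c ≠ ⊥ → b ⊓ c ≠ ⊥) : {b : α | IsAtom b} = {a} := by
  refine Set.eq_singleton_iff_unique_mem.mpr ⟨ha, fun b hb => ?_⟩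
  have hba : b ≤ a := hb.le_of_inf_ne_bot (huniform b a hb.ne_bot ha.ne_bot)
  exact (ha.le_iff_eq hb.ne_bot).mp hba

end Lattice

section Module

variable {R M : Type*} [CommRing R] [AddCommGroup M] [Module R M]

lemma isAtom_span_singleton_of_isMaximal {P : Ideal R} (hP : P.IsMaximal) {y : M} (hy : y ≠ 0)
    (hPy : P ≤ torsionOf R M y) : IsAtom (R ∙ y) := by
  have htorsion : torsionOf R M y = P :=
    (hP.eq_of_le (mt (torsionOf_eq_top_iff R y).mp hy) hPy).symm
  rw [← isSimpleModule_iff_isAtom, isSimpleModule_iff_quot_maximal]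
  exact ⟨_, htorsion ▸ hP, ⟨(quotTorsionOfEquivSpanSingleton R M y).symm⟩⟩

lemma notMem_smul_span_singleton {P : Ideal R} (hP : P ≠ ⊤) {x : M} (hxP : torsionOf R M x ≤ P) :
    x ∉ P • (R ∙ x) := by
  rw [mem_smul_span_singleton]
  rintro ⟨p, hp, hpx⟩
  have hsub : 1 - p ∈ P := hxP <| by
    rw [mem_torsionOf_iff, sub_smul, one_smul, hpx, sub_self]
  exact hP ((Ideal.eq_top_iff_one P).mpr (by simpa using P.add_mem hsub hp))

lemma IsComultiplication.exists_smul_ne_zero_of_notMem (hc : IsComultiplication R M)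
    {N : Submodule R M} {x : M} (hx : x ∉ N) : ∃ b : R, b • x ≠ 0 ∧ ∀ z ∈ N, b • z = 0 := by
  obtain ⟨I, hI⟩ := hc N
  obtain ⟨b, hbI, hbx⟩ : ∃ b ∈ I, b • x ≠ 0 := by simpa [hI x] using hx
  exact ⟨b, hbx, fun z hz => (hI z).mp hz b hbI⟩

lemma IsComultiplication.exists_isAtom [Nontrivial M] (hc : IsComultiplication R M) :
    ∃ S : Submodule R M, IsAtom S := by
  obtain ⟨x, hx⟩ := exists_ne (0 : M)
  obtain ⟨P, hP, hxP⟩ := Ideal.exists_le_maximal _ (mt (torsionOf_eq_top_iff R x).mp hx)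
  obtain ⟨b, hbx, hb⟩ :=
    hc.exists_smul_ne_zero_of_notMem (notMem_smul_span_singleton hP.ne_top hxP)
  refine ⟨_, isAtom_span_singleton_of_isMaximal hP hbx fun p hp => ?_⟩
  rw [mem_torsionOf_iff, smul_comm]
  exact hb _ (smul_mem_smul hp (mem_span_singleton_self x))

end Module

/-- A nonzero comultiplication module is uniform iff it is cocyclic
(its socle is simple and large). -/
theorem stmt5 {R M : Type*} [CommRing R] [AddCommGroup M] [Module R M]
    [Nontrivial M] (hc : IsComultiplication R M) :
    (∀ N K : Submodule R M, N ≠ ⊥ → K ≠ ⊥ → N ⊓ K ≠ ⊥) ↔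
      IsAtom (sSup {S : Submodule R M | IsAtom S}) ∧
        IsLarge (sSup {S : Submodule R M | IsAtom S}) := by
  constructor
  · intro huniform
    obtain ⟨S, hS⟩ := hc.exists_isAtom
    rw [setOf_isAtom_eq_singleton hS huniform, sSup_singleton]
    exact ⟨hS, fun L hL => huniform S L hS.ne_bot hL⟩
  · rintro ⟨hatom, hlarge⟩ N K hN hK
    have hsocle_le : sSup {S : Submodule R M | IsAtom S} ≤ N ⊓ K :=
      le_inf (hatom.le_of_inf_ne_bot (hlarge N hN)) (hatom.le_of_inf_ne_bot (hlarge K hK))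
    exact fun hNK => hatom.ne_bot (eq_bot_mono hsocle_le hNK)
end

section
/- Let M be a nonzero comultiplication R-module whose large sum graph Ǵ(M) is not connected. Then M has exactly two minimal submodules. -/
/-- The vertices of the large sum graph: nonzero non-large submodules. -/
abbrev LargeSumVtx (R M : Type*) [CommRing R] [AddCommGroup M] [Module R M] :=
  {N : Submodule R M // N ≠ ⊥ ∧ ¬ IsLarge N}

/-- The large sum graph: distinct nonzero non-large submodules `N, K` are adjacent
iff `N + K` is not large. -/
def largeSumGraph (R M : Type*) [CommRing R] [AddCommGroup M] [Module R M] :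
    SimpleGraph (LargeSumVtx R M) where
  Adj N K := N ≠ K ∧ ¬ IsLarge (N.1 ⊔ K.1)
  symm := ⟨fun a b ⟨h1, h2⟩ => ⟨h1.symm, by rwa [sup_comm]⟩⟩
  loopless := ⟨fun a h => h.1 rfl⟩

/-!
Two vertices `N, K` in different components force `A ⊔ B` to be large for all nonzero
`A ≤ N`, `B ≤ K`; taking `A = B = N ⊓ K` shows that `N ⊓ K = 0`. In a comultiplication
module every submodule `Z` of a direct sum `A ⊕ B` splits as `(Z ∩ A) ⊕ (Z ∩ B)`, since writing
`Z = (0 :_M I)` the annihilation conditions can be checked componentwise. Hence every atom lies in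
`N` or in `K` (as `N ⊕ K` is large), and two atoms `S, T ≤ N` coincide: `S ⊕ K` is large, so
`T ≤ S ⊕ K`, and `T` cannot lie in `K`. Atoms below `N` and `K` exist because a nonzero `x`
has a nonzero multiple killed by a maximal ideal `𝔪 ⊇ ann(x)`.
-/

section

variable {R M : Type*} [CommRing R] [AddCommGroup M] [Module R M]

theorem IsLarge.mono {A B : Submodule R M} (hA : IsLarge A) (hAB : A ≤ B) : IsLarge B :=
  fun L hL hBL => hA L hL (le_bot_iff.mp (hBL ▸ inf_le_inf_right L hAB))

theorem IsLarge.le_of_isAtom {L S : Submodule R M} (hL : IsLarge L) (hS : IsAtom S) : S ≤ L :=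
  hS.not_disjoint_iff_le.mp fun hSL => hL S hS.ne_bot (disjoint_iff.mp hSL.symm)

theorem isAtom_span_singleton_of_torsionOf_eq {𝔪 : Ideal R} (h𝔪 : 𝔪.IsMaximal) {x : M}
    (hx : Ideal.torsionOf R M x = 𝔪) : IsAtom (R ∙ x) := by
  rw [← isSimpleModule_iff_isAtom]
  have : IsSimpleModule R (R ⧸ Ideal.torsionOf R M x) := by
    rw [hx, isSimpleModule_iff_isCoatom]
    exact h𝔪.out
  exact IsSimpleModule.congr (Ideal.quotTorsionOfEquivSpanSingleton R M x).symm

theorem notMem_smul_span_singleton_of_torsionOf_le {𝔪 : Ideal R} (h𝔪 : 𝔪 ≠ ⊤) {x : M}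
    (hx : Ideal.torsionOf R M x ≤ 𝔪) : x ∉ 𝔪 • (R ∙ x) := by
  intro hmem
  obtain ⟨a, ha, hax⟩ := Submodule.mem_smul_span_singleton.mp hmem
  have h1a : 1 - a ∈ Ideal.torsionOf R M x := by
    rw [Ideal.mem_torsionOf_iff, sub_smul, one_smul, hax, sub_self]
  exact h𝔪 ((Ideal.eq_top_iff_one 𝔪).mpr (by simpa using 𝔪.add_mem (hx h1a) ha))

namespace IsComultiplication

theorem inf_sup_inf_eq_of_le_sup (hc : IsComultiplication R M) {A B Z : Submodule R M}
    (hAB : Disjoint A B) (hZ : Z ≤ A ⊔ B) : Z ⊓ A ⊔ Z ⊓ B = Z := by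
  refine le_antisymm (sup_le inf_le_left inf_le_left) fun z hz => ?_
  obtain ⟨I, hI⟩ := hc Z
  obtain ⟨a, ha, b, hb, rfl⟩ := Submodule.mem_sup.mp (hZ hz)
  have haZ : a ∈ Z := (hI a).mpr fun r hr => by
    have hsum : r • a + r • b = 0 := by rw [← smul_add]; exact (hI _).mp hz r hr
    refine Submodule.disjoint_def.mp hAB _ (A.smul_mem r ha) ?_
    rw [eq_neg_of_add_eq_zero_left hsum]
    exact B.neg_mem (B.smul_mem r hb)
  have hbZ : b ∈ Z := by simpa using Z.sub_mem hz haZ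
  exact Submodule.add_mem_sup ⟨haZ, ha⟩ ⟨hbZ, hb⟩

theorem le_or_le_of_isAtom_of_le_sup (hc : IsComultiplication R M) {A B S : Submodule R M}
    (hAB : Disjoint A B) (hS : IsAtom S) (hSAB : S ≤ A ⊔ B) : S ≤ A ∨ S ≤ B := by
  by_contra! hne
  rw [hS.not_le_iff_disjoint, hS.not_le_iff_disjoint] at hne
  apply hS.ne_bot
  rw [← hc.inf_sup_inf_eq_of_le_sup hAB hSAB, disjoint_iff.mp hne.1, disjoint_iff.mp hne.2,
    sup_bot_eq]

theorem eq_of_isAtom_of_isLarge_sup (hc : IsComultiplication R M) {A B S T : Submodule R M}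
    (hAB : Disjoint A B) (hS : IsAtom S) (hT : IsAtom T) (hSA : S ≤ A) (hTA : T ≤ A)
    (hSB : IsLarge (S ⊔ B)) : T = S := by
  rcases hc.le_or_le_of_isAtom_of_le_sup (hAB.mono_left hSA) hT (hSB.le_of_isAtom hT)
    with hTS | hTB
  · exact (hS.le_iff_eq hT.ne_bot).mp hTS
  · exact absurd ((hAB.mono_left hTA).eq_bot_of_le hTB) hT.ne_bot

theorem exists_isAtom_le (hc : IsComultiplication R M) {X : Submodule R M} (hX : X ≠ ⊥) :
    ∃ S : Submodule R M, IsAtom S ∧ S ≤ X := by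
  obtain ⟨x, hxX, hx0⟩ := (Submodule.ne_bot_iff X).mp hX
  obtain ⟨𝔪, h𝔪, hx𝔪⟩ := Ideal.exists_le_maximal _ (mt (Ideal.torsionOf_eq_top_iff R x).mp hx0)
  obtain ⟨I, hI⟩ := hc (𝔪 • (R ∙ x))
  -- `𝔪 • (R ∙ x) = (0 :_M I)` does not contain `x`, so some `r ∈ I` has `r • x ≠ 0`,
  -- while `𝔪 • (r • x) = r • (𝔪 • x) = 0`.
  obtain ⟨r, hrI, hrx⟩ : ∃ r ∈ I, r • x ≠ 0 := by
    by_contra! hall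
    exact notMem_smul_span_singleton_of_torsionOf_le h𝔪.ne_top hx𝔪 ((hI x).mpr hall)
  have hkill : 𝔪 ≤ Ideal.torsionOf R M (r • x) := fun t ht => by
    rw [Ideal.mem_torsionOf_iff, smul_comm]
    exact (hI _).mp (Submodule.smul_mem_smul ht (Submodule.mem_span_singleton_self x)) r hrI
  refine ⟨R ∙ r • x, isAtom_span_singleton_of_torsionOf_eq h𝔪 ?_, ?_⟩
  · exact (h𝔪.eq_of_le (mt (Ideal.torsionOf_eq_top_iff R _).mp hrx) hkill).symm
  · exact (Submodule.span_singleton_le_iff_mem _ _).mpr (X.smul_mem r hxX)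

end IsComultiplication

namespace LargeSumVtx

def ofLE (N : LargeSumVtx R M) {A : Submodule R M} (hA : A ≠ ⊥) (hAN : A ≤ N.1) :
    LargeSumVtx R M :=
  ⟨A, hA, fun hl => N.2.2 (hl.mono hAN)⟩

end LargeSumVtx

namespace largeSumGraph

theorem reachable_of_not_isLarge_sup {N K : LargeSumVtx R M} (h : ¬ IsLarge (N.1 ⊔ K.1)) :
    (largeSumGraph R M).Reachable N K := by
  by_cases hNK : N = K
  · exact hNK ▸ SimpleGraph.Reachable.refl N
  · exact SimpleGraph.Adj.reachable ⟨hNK, h⟩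

theorem reachable_ofLE (N : LargeSumVtx R M) {A : Submodule R M} (hA : A ≠ ⊥) (hAN : A ≤ N.1) :
    (largeSumGraph R M).Reachable N (N.ofLE hA hAN) :=
  reachable_of_not_isLarge_sup (by simpa [LargeSumVtx.ofLE, hAN] using N.2.2)

theorem isLarge_sup_of_not_reachable {N K : LargeSumVtx R M}
    (hNK : ¬ (largeSumGraph R M).Reachable N K) ⦃A B : Submodule R M⦄ (hA : A ≠ ⊥) (hB : B ≠ ⊥)
    (hAN : A ≤ N.1) (hBK : B ≤ K.1) : IsLarge (A ⊔ B) := by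
  by_contra hAB
  exact hNK ((reachable_ofLE N hA hAN).trans
    ((reachable_of_not_isLarge_sup (N := N.ofLE hA hAN) (K := K.ofLE hB hBK) hAB).trans
      (reachable_ofLE K hB hBK).symm))

theorem disjoint_of_not_reachable {N K : LargeSumVtx R M}
    (hNK : ¬ (largeSumGraph R M).Reachable N K) : Disjoint N.1 K.1 := by
  by_contra h
  have hlarge := isLarge_sup_of_not_reachable hNK (disjoint_iff.not.mp h) (disjoint_iff.not.mp h)
    inf_le_left inf_le_right
  exact N.2.2 (hlarge.mono (sup_le inf_le_left inf_le_left))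

end largeSumGraph

end

theorem stmt6_general {R M : Type*} [CommRing R] [AddCommGroup M] [Module R M]
    (hc : IsComultiplication R M)
    [Nonempty (LargeSumVtx R M)]
    (h : ¬ (largeSumGraph R M).Connected) :
    ∃ S₁ S₂ : Submodule R M, S₁ ≠ S₂ ∧ {S : Submodule R M | IsAtom S} = {S₁, S₂} := by
  obtain ⟨N, K, hNK⟩ : ∃ N K, ¬ (largeSumGraph R M).Reachable N K := by
    have : ¬ (largeSumGraph R M).Preconnected := fun hp =>
      h ((SimpleGraph.connected_iff _).mpr ⟨hp, inferInstance⟩)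
    simpa only [SimpleGraph.Preconnected, not_forall] using this
  have hlarge := largeSumGraph.isLarge_sup_of_not_reachable hNK
  have hdisj := largeSumGraph.disjoint_of_not_reachable hNK
  obtain ⟨S₁, hS₁, hS₁N⟩ := hc.exists_isAtom_le N.2.1
  obtain ⟨S₂, hS₂, hS₂K⟩ := hc.exists_isAtom_le K.2.1
  refine ⟨S₁, S₂, (hdisj.mono hS₁N hS₂K).ne hS₁.ne_bot, ?_⟩
  ext S
  refine ⟨fun hS => ?_, by rintro (rfl | rfl); exacts [hS₁, hS₂]⟩
  rcases hc.le_or_le_of_isAtom_of_le_sup hdisj hS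
      ((hlarge N.2.1 K.2.1 le_rfl le_rfl).le_of_isAtom hS) with hSN | hSK
  · exact Or.inl (hc.eq_of_isAtom_of_isLarge_sup hdisj hS₁ hS hS₁N hSN
      (hlarge hS₁.ne_bot K.2.1 hS₁N le_rfl))
  · refine Or.inr (hc.eq_of_isAtom_of_isLarge_sup hdisj.symm hS₂ hS hS₂K hSK ?_)
    rw [sup_comm]
    exact hlarge N.2.1 hS₂.ne_bot le_rfl hS₂K

/-- If the (non-null) large sum graph of a nonzero comultiplication module is not connected,
then the module has exactly two minimal submodules. -/
theorem stmt6 {R M : Type*} [CommRing R] [AddCommGroup M] [Module R M]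
    [Nontrivial M] (hc : IsComultiplication R M)
    [Nonempty (LargeSumVtx R M)]
    (h : ¬ (largeSumGraph R M).Connected) :
    ∃ S₁ S₂ : Submodule R M, S₁ ≠ S₂ ∧ {S : Submodule R M | IsAtom S} = {S₁, S₂} :=
  stmt6_general hc h
end

section
/- Let M be a nonzero comultiplication R-module such that the large sum graph Ǵ(M) contains a cycle. Then the girth of Ǵ(M) is 3. -/
/-!
Adjacency in the large sum graph only depends on `N ⊔ K` and largeness is upward closed, so two
vertices whose sum lies below the sum of an edge are adjacent, and the sum of an edge is again a
vertex. Take three consecutive edges `v₀ v₁`, `v₁ v₂`, `v₂ v₃` of a cycle. If `v₁, v₂` are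
incomparable, they form a triangle with `v₁ ⊔ v₂`. If `v₁ ≤ v₂`, then `v₁ ⊔ v₃ ≤ v₂ ⊔ v₃` makes
`v₁ v₂ v₃` a triangle; if `v₂ ≤ v₁`, then `v₀ ⊔ v₂ ≤ v₀ ⊔ v₁` makes `v₀ v₁ v₂` one.
-/

namespace SimpleGraph
variable {V : Type*} {G : SimpleGraph V}

lemma girth_eq_three_of_adj {a b c : V} (hab : G.Adj a b) (hbc : G.Adj b c) (hca : G.Adj c a) :
    G.girth = 3 := by
  classical
  have hK3 : completeGraph (Fin 3) ⊑ G := (not_cliqueFree_iff_top_isContained 3).1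
    fun hG => hG _ (is3Clique_triple_iff.2 ⟨hab, hca.symm, hbc⟩)
  have hle : G.egirth ≤ 3 := egirth_top (α := Fin 3) (by simp) ▸ hK3.egirth_le
  simp [girth, le_antisymm hle three_le_egirth]

lemma exists_adj_adj_adj_of_not_isAcyclic (h : ¬ G.IsAcyclic) :
    ∃ v₀ v₁ v₂ v₃, G.Adj v₀ v₁ ∧ G.Adj v₁ v₂ ∧ G.Adj v₂ v₃ ∧ v₀ ≠ v₂ ∧ v₁ ≠ v₃ := by
  obtain ⟨v₀, w, hw⟩ : ∃ v₀, ∃ w : G.Walk v₀ v₀, w.IsCycle := by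
    simpa [IsAcyclic] using h
  rcases w with - | ⟨h₀₁, _ | ⟨h₁₂, _ | ⟨h₂₃, q⟩⟩⟩
  · exact (Walk.not_isCycle_nil hw).elim
  · exact absurd hw.three_le_length (by simp)
  · exact absurd hw.three_le_length (by simp)
  have hnodup := hw.support_nodup
  simp only [Walk.support_cons, List.tail_cons, List.nodup_cons] at hnodup
  refine ⟨_, _, _, _, h₀₁, h₁₂, h₂₃, ?_, ?_⟩
  · rintro rfl
    exact hnodup.2.1 (by simp [q.end_mem_support])
  · rintro rfl
    exact hnodup.1 (by simp [q.start_mem_support])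

end SimpleGraph

section LargeSumGraph

variable {R M : Type*} [CommRing R] [AddCommGroup M] [Module R M]

lemma IsLarge.mono_s9 {N K : Submodule R M} (hN : IsLarge N) (h : N ≤ K) : IsLarge K :=
  fun L hL hKL => hN L hL (eq_bot_iff.2 (hKL ▸ inf_le_inf_right L h))

lemma largeSumGraph_adj_of_sup_le {x y u w : LargeSumVtx R M} (hxy : x ≠ y)
    (huw : (largeSumGraph R M).Adj u w) (h : x.1 ⊔ y.1 ≤ u.1 ⊔ w.1) :
    (largeSumGraph R M).Adj x y :=
  ⟨hxy, fun hl => huw.2 (hl.mono_s9 h)⟩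

lemma exists_triangle_of_largeSumGraph_adj {x y : LargeSumVtx R M}
    (hxy : (largeSumGraph R M).Adj x y) (hxy' : ¬ x.1 ≤ y.1) (hyx : ¬ y.1 ≤ x.1) :
    ∃ a b c, (largeSumGraph R M).Adj a b ∧ (largeSumGraph R M).Adj b c ∧
      (largeSumGraph R M).Adj c a := by
  let s : LargeSumVtx R M := ⟨x.1 ⊔ y.1, ne_bot_of_le_ne_bot x.2.1 le_sup_left, hxy.2⟩
  have hys : y ≠ s := fun h => hxy' (le_sup_left.trans (congrArg Subtype.val h).ge)
  have hsx : s ≠ x := fun h => hyx (le_sup_right.trans (congrArg Subtype.val h).le)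
  exact ⟨x, y, s, hxy, largeSumGraph_adj_of_sup_le hys hxy (sup_le le_sup_right le_rfl),
    largeSumGraph_adj_of_sup_le hsx hxy (sup_le le_rfl le_sup_left)⟩

lemma exists_triangle_of_largeSumGraph_path {v₀ v₁ v₂ v₃ : LargeSumVtx R M}
    (h₀₁ : (largeSumGraph R M).Adj v₀ v₁) (h₁₂ : (largeSumGraph R M).Adj v₁ v₂)
    (h₂₃ : (largeSumGraph R M).Adj v₂ v₃) (h₀₂ : v₀ ≠ v₂) (h₁₃ : v₁ ≠ v₃) :
    ∃ a b c, (largeSumGraph R M).Adj a b ∧ (largeSumGraph R M).Adj b c ∧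
      (largeSumGraph R M).Adj c a := by
  by_cases h₁₂' : v₁.1 ≤ v₂.1
  · exact ⟨v₁, v₂, v₃, h₁₂, h₂₃,
      largeSumGraph_adj_of_sup_le h₁₃.symm h₂₃ (sup_le le_sup_right (h₁₂'.trans le_sup_left))⟩
  by_cases h₂₁ : v₂.1 ≤ v₁.1
  · exact ⟨v₀, v₁, v₂, h₀₁, h₁₂,
      largeSumGraph_adj_of_sup_le h₀₂.symm h₀₁ (sup_le (h₂₁.trans le_sup_right) le_sup_left)⟩
  exact exists_triangle_of_largeSumGraph_adj h₁₂ h₁₂' h₂₁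

end LargeSumGraph

theorem stmt9_general {R M : Type*} [CommRing R] [AddCommGroup M] [Module R M]
    (h : ¬ (largeSumGraph R M).IsAcyclic) :
    (largeSumGraph R M).girth = 3 := by
  obtain ⟨v₀, v₁, v₂, v₃, h₀₁, h₁₂, h₂₃, h₀₂, h₁₃⟩ :=
    SimpleGraph.exists_adj_adj_adj_of_not_isAcyclic h
  obtain ⟨a, b, c, hab, hbc, hca⟩ := exists_triangle_of_largeSumGraph_path h₀₁ h₁₂ h₂₃ h₀₂ h₁₃
  exact SimpleGraph.girth_eq_three_of_adj hab hbc hca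

/-- If the large sum graph of a nonzero comultiplication module contains a cycle, its girth
is `3`. -/
theorem stmt9 {R M : Type*} [CommRing R] [AddCommGroup M] [Module R M]
    [Nontrivial M] (hc : IsComultiplication R M)
    (h : ¬ (largeSumGraph R M).IsAcyclic) :
    (largeSumGraph R M).girth = 3 :=
  stmt9_general h
end

section
/- Let M be a nonzero comultiplication R-module with non-null, non-empty large sum graph Ǵ(M). Then the clique number of Ǵ(M) is at least the number of minimal submodules of M. -/
/-!
In a comultiplication module, `N ≤ K` as soon as `ann K ≤ ann N`, and the annihilator of a minimal
submodule is a maximal ideal. Hence a minimal submodule `C ≤ A + B`, with `A`, `B` minimal, is `A`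
or `B`: `ann A * ann B ≤ ann C` and `ann C` is prime. If there are at most two minimal submodules,
any edge of the graph is a big enough clique. If there are at least three, a large sum `A + B` of
two of them would contain, and hence equal, a third one; so the minimal submodules are pairwise
adjacent vertices.
-/

universe u

theorem Set.nonempty_embedding_of_encard_le {α β : Type u} {s : Set α} {t : Set β}
    (ht : t.Finite) (h : s.encard ≤ t.encard) : Nonempty (s ↪ t) :=
  (Cardinal.le_def s t).1 <|
    (Cardinal.toENat_le_iff_of_lt_aleph0 (Cardinal.lt_aleph0_iff_set_finite.2 ht)).1 h

theorem Set.exists_mem_ne_ne_of_two_lt_encard {α : Type*} {s : Set α} (h : 2 < s.encard)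
    (a b : α) : ∃ c ∈ s, c ≠ a ∧ c ≠ b := by
  by_contra! hab
  have hsub : s ⊆ {a, b} := fun c hc => or_iff_not_imp_left.2 (hab c hc)
  have : s.encard ≤ 2 := calc
    s.encard ≤ ({a, b} : Set α).encard := Set.encard_le_encard hsub
    _ ≤ ({b} : Set α).encard + 1 := Set.encard_insert_le _ _
    _ = 2 := by rw [Set.encard_singleton]; rfl
  exact this.not_gt h

theorem SimpleGraph.Adj.exists_isClique_nonempty_embedding {V α : Type u} {G : SimpleGraph V}
    {u v : V} (huv : G.Adj u v) {t : Set α} (ht : t.encard ≤ 2) :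
    ∃ s : Set V, G.IsClique s ∧ Nonempty (t ↪ s) :=
  ⟨{u, v}, SimpleGraph.isClique_pair.2 fun _ => huv,
    Set.nonempty_embedding_of_encard_le (Set.toFinite _) (by rwa [Set.encard_pair huv.ne])⟩

section LargeSumGraph

variable {R M : Type*} [CommRing R] [AddCommGroup M] [Module R M]

theorem IsAtom.not_isLarge_of_ne {A B : Submodule R M} (hA : IsAtom A) (hB : IsAtom B)
    (hne : A ≠ B) : ¬ IsLarge A :=
  fun hL => hL B hB.ne_bot (disjoint_iff.1 (hA.disjoint_of_ne hB hne))

namespace IsComultiplication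

theorem le_of_annihilator_le (hc : IsComultiplication R M) {N K : Submodule R M}
    (h : K.annihilator ≤ N.annihilator) : N ≤ K := by
  obtain ⟨I, hI⟩ := hc K
  have hIK : I ≤ K.annihilator := fun r hr =>
    Submodule.mem_annihilator.2 fun k hk => (hI k).1 hk r hr
  exact fun m hm => (hI m).2 fun r hr => Submodule.mem_annihilator.1 (h (hIK hr)) m hm

theorem eq_or_eq_of_isAtom_of_le_sup (hc : IsComultiplication R M) {A B C : Submodule R M}
    (hA : IsAtom A) (hB : IsAtom B) (hC : IsAtom C) (hle : C ≤ A ⊔ B) : C = A ∨ C = B := by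
  have : IsSimpleModule R C := isSimpleModule_iff_isAtom.2 hC
  have hprime : C.annihilator.IsPrime := IsSimpleModule.annihilator_isMaximal.isPrime
  have hmul : A.annihilator * B.annihilator ≤ C.annihilator := calc
    A.annihilator * B.annihilator ≤ A.annihilator ⊓ B.annihilator := Ideal.mul_le_inf
    _ = (A ⊔ B).annihilator := (Submodule.annihilator_sup A B).symm
    _ ≤ C.annihilator := Submodule.annihilator_mono hle
  refine (hprime.mul_le.1 hmul).imp (fun h => ?_) (fun h => ?_)
  · exact (hA.le_iff.1 (hc.le_of_annihilator_le h)).resolve_left hC.ne_bot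
  · exact (hB.le_iff.1 (hc.le_of_annihilator_le h)).resolve_left hC.ne_bot

theorem eq_or_eq_of_isLarge_sup (hc : IsComultiplication R M) {A B C : Submodule R M}
    (hA : IsAtom A) (hB : IsAtom B) (hC : IsAtom C) (hL : IsLarge (A ⊔ B)) : C = A ∨ C = B :=
  hc.eq_or_eq_of_isAtom_of_le_sup hA hB hC <|
    hC.not_disjoint_iff_le.1 fun hd => hL C hC.ne_bot (disjoint_iff.1 hd.symm)

theorem exists_isClique_nonempty_embedding_of_two_lt_encard (hc : IsComultiplication R M)
    (h : 2 < {S : Submodule R M | IsAtom S}.encard) :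
    ∃ s : Set (LargeSumVtx R M), (largeSumGraph R M).IsClique s ∧
      Nonempty ({S : Submodule R M | IsAtom S} ↪ s) := by
  have hnl (A : Submodule R M) (hA : IsAtom A) : ¬ IsLarge A := by
    obtain ⟨B, hB, hBA⟩ := Set.exists_ne_of_one_lt_encard (lt_trans (by norm_num) h) A
    exact hA.not_isLarge_of_ne hB hBA.symm
  refine ⟨{v | IsAtom v.1}, fun x hx y hy hxy => ⟨hxy, fun hL => ?_⟩,
    ⟨⟨fun A => ⟨⟨A.1, A.2.ne_bot, hnl A.1 A.2⟩, A.2⟩, fun A B hAB => ?_⟩⟩⟩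
  · obtain ⟨C, hC, hCx, hCy⟩ := Set.exists_mem_ne_ne_of_two_lt_encard h x.1 y.1
    exact (hc.eq_or_eq_of_isLarge_sup hx hy hC hL).elim hCx hCy
  · exact Subtype.ext (congrArg (fun z => z.1.1) hAB)

end IsComultiplication

end LargeSumGraph

theorem stmt15_general {R M : Type*} [CommRing R] [AddCommGroup M] [Module R M]
    (hc : IsComultiplication R M)
    (hedge : ∃ u v : LargeSumVtx R M, (largeSumGraph R M).Adj u v) :
    ∃ s : Set (LargeSumVtx R M), (largeSumGraph R M).IsClique s ∧
      Nonempty ({S : Submodule R M | IsAtom S} ↪ s) := by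
  rcases le_or_gt {S : Submodule R M | IsAtom S}.encard 2 with h | h
  · obtain ⟨u, v, huv⟩ := hedge
    exact huv.exists_isClique_nonempty_embedding h
  · exact hc.exists_isClique_nonempty_embedding_of_two_lt_encard h

/-- For a nonzero comultiplication module with non-null, non-empty large sum graph, the clique
number is at least the number of minimal submodules: there is a clique into which the set of
minimal submodules embeds. -/
theorem stmt15 {R M : Type*} [CommRing R] [AddCommGroup M] [Module R M]
    [Nontrivial M] (hc : IsComultiplication R M)
    [Nonempty (LargeSumVtx R M)]
    (hedge : ∃ u v : LargeSumVtx R M, (largeSumGraph R M).Adj u v) :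
    ∃ s : Set (LargeSumVtx R M), (largeSumGraph R M).IsClique s ∧
      Nonempty ({S : Submodule R M | IsAtom S} ↪ s) :=
  stmt15_general hc hedge
end

section
/- Let M be a nonzero comultiplication R-module with finite clique number for its large sum graph Ǵ(M) and with n = |Min(M)| ≥ 2 minimal submodules. Then ω(Ǵ(M)) ≥ 2^{n-1} − 1. -/
/-!
The annihilator of a minimal submodule `S` is maximal, hence prime, and in a comultiplication
module `N ≤ P ↔ ann P ≤ ann N`. Since `ann (N ⊔ K) = ann N ⊓ ann K`, prime avoidance shows that
`S ≤ N ⊔ K` forces `S ≤ N` or `S ≤ K`. Hence, for a fixed minimal submodule `S₀`, the nonzero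
submodules not containing `S₀` form a clique of the large sum graph (a submodule missing an
atom is never large), and the `2 ^ (n - 1) - 1` sums of nonempty sets of the other minimal
submodules are pairwise distinct members of it.
-/

theorem Submodule.annihilator_isMaximal_of_isAtom {R M : Type*} [CommRing R] [AddCommGroup M]
    [Module R M] {S : Submodule R M} (hS : IsAtom S) : S.annihilator.IsMaximal :=
  have : IsSimpleModule R S := isSimpleModule_iff_isAtom.2 hS
  IsSimpleModule.annihilator_isMaximal

theorem not_isLarge_of_atom_not_le {R M : Type*} [CommRing R] [AddCommGroup M] [Module R M]
    {S N : Submodule R M} (hS : IsAtom S) (h : ¬ S ≤ N) : ¬ IsLarge N := fun hN =>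
  hN S hS.1 ((hS.le_iff.1 inf_le_right).resolve_right fun he => h (he ▸ inf_le_left))

namespace IsComultiplication

variable {R M : Type*} [CommRing R] [AddCommGroup M] [Module R M]

theorem mem_iff_forall_annihilator (hc : IsComultiplication R M) (N : Submodule R M) (m : M) :
    m ∈ N ↔ ∀ r ∈ N.annihilator, r • m = 0 := by
  obtain ⟨I, hI⟩ := hc N
  refine ⟨fun hm r hr => Submodule.mem_annihilator.1 hr m hm, fun h => ?_⟩
  exact (hI m).2 fun r hr => h r (Submodule.mem_annihilator.2 fun x hx => (hI x).1 hx r hr)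

theorem annihilator_le_annihilator_iff (hc : IsComultiplication R M) {N P : Submodule R M} :
    P.annihilator ≤ N.annihilator ↔ N ≤ P := by
  refine ⟨fun h m hm => ?_, Submodule.annihilator_mono⟩
  exact (hc.mem_iff_forall_annihilator P m).2 fun r hr =>
    (hc.mem_iff_forall_annihilator N m).1 hm r (h hr)

theorem atom_le_sup_iff (hc : IsComultiplication R M) {S N K : Submodule R M} (hS : IsAtom S) :
    S ≤ N ⊔ K ↔ S ≤ N ∨ S ≤ K := by
  simp only [← hc.annihilator_le_annihilator_iff, Submodule.annihilator_sup]
  exact (Submodule.annihilator_isMaximal_of_isAtom hS).isPrime.inf_le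

theorem exists_le_of_atom_le_finset_sup (hc : IsComultiplication R M) {S : Submodule R M}
    (hS : IsAtom S) {ι : Type*} [DecidableEq ι] {s : Finset ι} {f : ι → Submodule R M}
    (h : S ≤ s.sup f) : ∃ i ∈ s, S ≤ f i := by
  induction s using Finset.induction_on with
  | empty => exact absurd (le_bot_iff.1 h) hS.1
  | insert i s _ ih =>
    rw [Finset.sup_insert, hc.atom_le_sup_iff hS] at h
    rcases h with hi | hs
    · exact ⟨i, Finset.mem_insert_self i s, hi⟩
    · obtain ⟨j, hj, hSj⟩ := ih hs
      exact ⟨j, Finset.mem_insert_of_mem hj, hSj⟩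

theorem subset_of_sup_id_le (hc : IsComultiplication R M) {A B : Finset (Submodule R M)}
    (hA : ∀ T ∈ A, IsAtom T) (hB : ∀ T ∈ B, IsAtom T) (h : A.sup id ≤ B.sup id) : A ⊆ B := by
  intro S hSA
  have hS := hA S hSA
  obtain ⟨T, hTB, hST⟩ := hc.exists_le_of_atom_le_finset_sup hS ((Finset.le_sup hSA).trans h)
  rwa [((hB T hTB).le_iff.1 hST).resolve_left hS.1]

theorem isClique_largeSumGraph_setOf_atom_not_le (hc : IsComultiplication R M)
    {S : Submodule R M} (hS : IsAtom S) :
    (largeSumGraph R M).IsClique {v | ¬ S ≤ v.1} := fun N hN K hK hNK =>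
  ⟨hNK, not_isLarge_of_atom_not_le hS (by rw [hc.atom_le_sup_iff hS]; exact not_or.2 ⟨hN, hK⟩)⟩

theorem exists_isNClique_largeSumGraph (hc : IsComultiplication R M) {S : Submodule R M}
    (hS : IsAtom S) {t : Finset (Submodule R M)} (ht : ∀ T ∈ t, IsAtom T) (hSt : S ∉ t) :
    ∃ s, (largeSumGraph R M).IsNClique (2 ^ t.card - 1) s := by
  classical
  set P := t.powerset.erase ∅
  have hPt : ∀ A ∈ P, ∀ T ∈ A, IsAtom T := fun A hA T hT =>
    ht T (Finset.mem_powerset.1 (Finset.mem_of_mem_erase hA) hT)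
  have hS_not_le : ∀ A ∈ P, ¬ S ≤ A.sup id := fun A hA hle => by
    obtain ⟨T, hTA, hST⟩ := hc.exists_le_of_atom_le_finset_sup hS hle
    rw [← ((hPt A hA T hTA).le_iff.1 hST).resolve_left hS.1] at hTA
    exact hSt (Finset.mem_powerset.1 (Finset.mem_of_mem_erase hA) hTA)
  have hvertex : ∀ N ∈ P.image (·.sup id), N ≠ ⊥ ∧ ¬ IsLarge N := by
    simp only [Finset.mem_image]
    rintro _ ⟨A, hA, rfl⟩
    obtain ⟨T, hT⟩ := Finset.nonempty_iff_ne_empty.2 (Finset.ne_of_mem_erase hA)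
    exact ⟨ne_bot_of_le_ne_bot (hPt A hA T hT).1 (Finset.le_sup (f := id) hT),
      not_isLarge_of_atom_not_le hS (hS_not_le A hA)⟩
  refine ⟨(P.image (·.sup id)).subtype _, ?_, ?_⟩
  · refine (hc.isClique_largeSumGraph_setOf_atom_not_le hS).subset fun v hv => ?_
    obtain ⟨A, hA, hAv⟩ := Finset.mem_image.1 (Finset.mem_subtype.1 hv)
    show ¬ S ≤ v.1
    rw [← hAv]
    exact hS_not_le A hA
  · have hinj : Set.InjOn (·.sup id) (P : Set (Finset (Submodule R M))) := fun A hA B hB h =>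
      (hc.subset_of_sup_id_le (hPt A hA) (hPt B hB) h.le).antisymm
        (hc.subset_of_sup_id_le (hPt B hB) (hPt A hA) h.ge)
    rw [Finset.card_subtype, Finset.filter_true_of_mem hvertex, Finset.card_image_of_injOn hinj,
      Finset.card_erase_of_mem (Finset.empty_mem_powerset t), Finset.card_powerset]

end IsComultiplication

theorem stmt16_general {R M : Type*} [CommRing R] [AddCommGroup M] [Module R M]
    (hc : IsComultiplication R M)
    (hbdd : BddAbove {n : ℕ | ∃ s, (largeSumGraph R M).IsNClique n s})
    (n : ℕ) (hn : Nat.card {S : Submodule R M | IsAtom S} = n) :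
    2 ^ (n - 1) - 1 ≤ (largeSumGraph R M).cliqueNum := by
  classical
  rcases Nat.eq_zero_or_pos n with rfl | hpos
  · exact Nat.zero_le _
  have hfin : {S : Submodule R M | IsAtom S}.Finite :=
    Set.finite_coe_iff.1 (Nat.card_pos_iff.1 (hn ▸ hpos)).2
  set t := hfin.toFinset
  have htcard : t.card = n := by rw [← hn, Nat.card_coe_set_eq, Set.ncard_eq_toFinset_card _ hfin]
  obtain ⟨S, hSt⟩ := Finset.card_pos.1 (htcard ▸ hpos)
  have hatom : ∀ T ∈ t.erase S, IsAtom T := fun T hT =>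
    hfin.mem_toFinset.1 (Finset.mem_of_mem_erase hT)
  obtain ⟨s, hs⟩ := hc.exists_isNClique_largeSumGraph (hfin.mem_toFinset.1 hSt) hatom
    (Finset.notMem_erase S t)
  rw [Finset.card_erase_of_mem hSt, htcard] at hs
  exact le_csSup hbdd ⟨s, hs⟩

/-- If the large sum graph of a nonzero comultiplication module has finite clique number and the
module has `n ≥ 2` minimal submodules, then the clique number is at least `2 ^ (n - 1) - 1`. -/
theorem stmt16 {R M : Type*} [CommRing R] [AddCommGroup M] [Module R M]
    [Nontrivial M] (hc : IsComultiplication R M)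
    (hbdd : BddAbove {n : ℕ | ∃ s, (largeSumGraph R M).IsNClique n s})
    (n : ℕ) (hn : Nat.card {S : Submodule R M | IsAtom S} = n) (hn2 : 2 ≤ n) :
    2 ^ (n - 1) - 1 ≤ (largeSumGraph R M).cliqueNum :=
  stmt16_general hc hbdd n hn
end
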